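/- Let p > 1 and let ρ : ℝ → ℝ be a 1-periodic function which is integrable on [0,1], with average ρ̄ = ∫₀¹ ρ(t) dt. Then for every ε > 0 and every continuously differentiable function u : ℝ → ℝ with u(0) = u(1) = 0, | ∫₀¹ (ρ(x/ε) − ρ̄) |u(x)|^p dx | ≤ (p/2) · ε · (∫₀¹ |ρ(t) − ρ̄| dt) · ‖u‖_{L^p(0,1)}^{p−1} · ‖u'‖_{L^p(0,1)}. -/

import Mathlib

/-!
Put `f = ρ - ρ̄` and `F x = ∫₀ˣ f (t / ε) dt = ε ∫₀^{x/ε} f`. As `f` is `1`-periodic with mean zero,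
its primitive is `1`-periodic, and on `[0, 1]` it is bounded by `½ ∫₀¹ |f|`, because the integrals
of `f` over `[0, w]` and `[w, 1]` cancel; hence `|F| ≤ ε ∫₀¹ |f| / 2`. Integrating by parts against
the absolutely continuous function `|u|^p`, which vanishes at `1` (while `F 0 = 0`), gives
`∫₀¹ f (x / ε) |u|^p = -∫₀¹ F (|u|^p)'`, and `|(|u|^p)'| ≤ p |u|^{p-1} |u'|`. Hölder's inequality
with exponents `p / (p - 1)` and `p` concludes.
-/

open MeasureTheory intervalIntegral Set

theorem abs_intervalIntegral_le_half_of_integral_eq_zero {f : ℝ → ℝ} {a b w : ℝ}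
    (hf : IntervalIntegrable f volume a b) (h0 : ∫ x in a..b, f x = 0) (hw : w ∈ Icc a b) :
    |∫ x in a..w, f x| ≤ (∫ x in a..b, |f x|) / 2 := by
  have haw : IntervalIntegrable f volume a w := hf.mono_set (uIcc_subset_uIcc_left (by
    rw [uIcc_of_le (hw.1.trans hw.2)]; exact hw))
  have hwb : IntervalIntegrable f volume w b := hf.mono_set (uIcc_subset_uIcc_right (by
    rw [uIcc_of_le (hw.1.trans hw.2)]; exact hw))
  have hsplit := integral_add_adjacent_intervals haw hwb
  have hleft : |∫ x in a..w, f x| ≤ ∫ x in a..w, |f x| := abs_integral_le_integral_abs hw.1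
  have hright : |∫ x in a..w, f x| ≤ ∫ x in w..b, |f x| := by
    rw [show ∫ x in a..w, f x = -∫ x in w..b, f x by linarith, abs_neg]
    exact abs_integral_le_integral_abs hw.2
  have habs := integral_add_adjacent_intervals haw.abs hwb.abs
  linarith

theorem Function.Periodic.primitive_periodic_of_integral_eq_zero {f : ℝ → ℝ} {T : ℝ}
    (hf : Function.Periodic f T) (hint : IntervalIntegrable f volume 0 T) (h0 : ∫ x in 0..T, f x = 0) :
    Function.Periodic (fun y => ∫ x in 0..y, f x) T := by
  intro y
  rcases eq_or_ne T 0 with rfl | hT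
  · simp
  simp only [hf.intervalIntegral_add_eq_add 0 y (hf.intervalIntegrable₀ hT hint), zero_add, h0,
    add_zero]

theorem Function.Periodic.abs_primitive_le_half {f : ℝ → ℝ} {T : ℝ} (hf : Function.Periodic f T)
    (hT : 0 < T) (hint : IntervalIntegrable f volume 0 T) (h0 : ∫ x in 0..T, f x = 0) (y : ℝ) :
    |∫ x in 0..y, f x| ≤ (∫ x in 0..T, |f x|) / 2 := by
  obtain ⟨w, hw, hyw⟩ := (hf.primitive_periodic_of_integral_eq_zero hint h0).exists_mem_Ico₀ hT y
  rw [hyw]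
  exact abs_intervalIntegral_le_half_of_integral_eq_zero hint h0 (Ico_subset_Icc_self hw)

theorem integral_mul_eq_neg_integral_primitive_mul_deriv {f g : ℝ → ℝ} {a b : ℝ}
    (hf : IntervalIntegrable f volume a b) (hg : AbsolutelyContinuousOnInterval g a b)
    (hgb : g b = 0) :
    ∫ x in a..b, f x * g x = -∫ x in a..b, (∫ t in a..x, f t) * deriv g x := by
  have hF := hf.absolutelyContinuousOnInterval_intervalIntegral (c := a) left_mem_uIcc
  have hderiv :
      ∫ x in a..b, deriv (fun y => ∫ t in a..y, f t) x * g x = ∫ x in a..b, f x * g x := by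
    refine integral_congr_ae ?_
    filter_upwards [hf.ae_hasDerivAt_integral] with x hx hxab
    rw [(hx (uIoc_subset_uIcc hxab) a left_mem_uIcc).deriv]
  rw [hF.integral_mul_deriv_eq_deriv_mul hg, hderiv, hgb, integral_same]
  ring

theorem integral_rpow_sub_one_mul_le {α : Type*} [MeasurableSpace α] {μ : Measure α} {p : ℝ}
    (hp : 1 < p) {f g : α → ℝ} (hf : MemLp f (ENNReal.ofReal p) μ)
    (hg : MemLp g (ENNReal.ofReal p) μ) :
    ∫ x, |f x| ^ (p - 1) * |g x| ∂μ ≤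
      ((∫ x, |f x| ^ p ∂μ) ^ (1 / p)) ^ (p - 1) * (∫ x, |g x| ^ p ∂μ) ^ (1 / p) := by
  have hp1 : 0 < p - 1 := by linarith
  have hf' : MemLp (fun x => |f x| ^ (p - 1)) (ENNReal.ofReal (p / (p - 1))) μ := by
    have := hf.norm_rpow_div (ENNReal.ofReal (p - 1))
    rwa [ENNReal.toReal_ofReal hp1.le, ← ENNReal.ofReal_div_of_pos hp1] at this
  have holder := integral_mul_le_Lp_mul_Lq_of_nonneg (Real.HolderConjugate.conjExponent hp).symm
    (ae_of_all _ fun x => by positivity) (ae_of_all _ fun x => abs_nonneg (g x)) hf' hg.norm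
  have hpow : ∀ x, (|f x| ^ (p - 1)) ^ (p / (p - 1)) = |f x| ^ p := fun x => by
    rw [← Real.rpow_mul (abs_nonneg _), mul_div_cancel₀ _ hp1.ne']
  have hA : 0 ≤ ∫ x, |f x| ^ p ∂μ := integral_nonneg fun x => by positivity
  calc ∫ x, |f x| ^ (p - 1) * |g x| ∂μ
      ≤ (∫ x, (|f x| ^ (p - 1)) ^ (p / (p - 1)) ∂μ) ^ (1 / (p / (p - 1))) *
          (∫ x, |g x| ^ p ∂μ) ^ (1 / p) := holder
    _ = _ := by
      simp only [hpow]
      rw [← Real.rpow_mul hA, one_div_div, one_div_mul_eq_div]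

theorem Continuous.memLp_restrict_Ioc {E : Type*} [NormedAddCommGroup E] {f : ℝ → E}
    (hf : Continuous f) (q : ENNReal) (a b : ℝ) : MemLp f q (volume.restrict (Ioc a b)) := by
  obtain ⟨C, hC⟩ := isCompact_Icc.exists_bound_of_continuousOn (s := Icc a b) hf.continuousOn
  exact MemLp.of_bound hf.aestronglyMeasurable.restrict C
    (ae_restrict_of_forall_mem measurableSet_Ioc fun x hx => hC x (Ioc_subset_Icc_self hx))

theorem abs_deriv_abs_rpow_comp_le {u : ℝ → ℝ} {p : ℝ} (hp : 1 < p) (hu : Differentiable ℝ u)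
    (x : ℝ) : |deriv (fun y => |u y| ^ p) x| ≤ p * |u x| ^ (p - 1) * |deriv u x| := by
  simpa only [Real.norm_eq_abs, ← norm_deriv_eq_norm_fderiv] using
    norm_fderiv_norm_rpow_le hu hp (x := x)

theorem abs_integral_mul_deriv_abs_rpow_le {u F : ℝ → ℝ} {p M a b : ℝ} (hp : 1 < p)
    (hu : ContDiff ℝ 1 u) (hab : a ≤ b) (hF : ∀ x, |F x| ≤ M) :
    |∫ x in a..b, F x * deriv (fun y => |u y| ^ p) x| ≤
      M * p * ((∫ x in a..b, |u x| ^ p) ^ (1 / p)) ^ (p - 1) *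
        (∫ x in a..b, |deriv u x| ^ p) ^ (1 / p) := by
  have hM : 0 ≤ M := (abs_nonneg _).trans (hF 0)
  have hu' : Continuous (deriv u) := hu.continuous_deriv le_rfl
  have hcont : Continuous fun x => |u x| ^ (p - 1) * |deriv u x| :=
    (hu.continuous.abs.rpow_const fun _ => Or.inr (by linarith)).mul hu'.abs
  have hpointwise : ∀ x, ‖F x * deriv (fun y => |u y| ^ p) x‖ ≤
      M * p * (|u x| ^ (p - 1) * |deriv u x|) := fun x => by
    rw [Real.norm_eq_abs, abs_mul, mul_assoc M, ← mul_assoc p]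
    exact mul_le_mul (hF x) (abs_deriv_abs_rpow_comp_le hp (hu.differentiable one_ne_zero) x)
      (abs_nonneg _) hM
  calc |∫ x in a..b, F x * deriv (fun y => |u y| ^ p) x|
      ≤ ∫ x in a..b, M * p * (|u x| ^ (p - 1) * |deriv u x|) :=
        norm_integral_le_of_norm_le hab (ae_of_all _ fun x _ => hpointwise x)
          ((continuous_const.mul hcont).intervalIntegrable a b)
    _ = M * p * ∫ x in Ioc a b, |u x| ^ (p - 1) * |deriv u x| := by
        rw [intervalIntegral.integral_const_mul, integral_of_le hab]
    _ ≤ M * p * (((∫ x in Ioc a b, |u x| ^ p) ^ (1 / p)) ^ (p - 1) *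
          (∫ x in Ioc a b, |deriv u x| ^ p) ^ (1 / p)) := by
        gcongr
        exact integral_rpow_sub_one_mul_le hp (hu.continuous.memLp_restrict_Ioc _ a b)
          (hu'.memLp_restrict_Ioc _ a b)
    _ = _ := by rw [integral_of_le hab, integral_of_le hab]; ring

theorem oneDim_power_estimate_general (p : ℝ) (hp : 1 < p)
    (ρ : ℝ → ℝ) (hper : Function.Periodic ρ 1)
    (hint : IntervalIntegrable ρ volume 0 1)
    (ρbar : ℝ) (hbar : ρbar = ∫ t in (0:ℝ)..1, ρ t)
    (ε : ℝ) (hε : 0 < ε)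
    (u : ℝ → ℝ) (hu : ContDiff ℝ 1 u) (hu1 : u 1 = 0) :
    |∫ x in (0:ℝ)..1, (ρ (x / ε) - ρbar) * |u x| ^ p| ≤
      p / 2 * ε * (∫ t in (0:ℝ)..1, |ρ t - ρbar|) *
        ((∫ x in (0:ℝ)..1, |u x| ^ p) ^ (1 / p)) ^ (p - 1) *
        (∫ x in (0:ℝ)..1, |deriv u x| ^ p) ^ (1 / p) := by
  set f : ℝ → ℝ := fun t => ρ t - ρbar
  have hf_int : IntervalIntegrable f volume 0 1 := hint.sub intervalIntegrable_const
  have hf_per : Function.Periodic f 1 := fun x => by simp only [f, hper x]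
  have hf_mean : ∫ t in (0:ℝ)..1, f t = 0 := by
    simp [f, integral_sub hint intervalIntegrable_const, hbar]
  have hf_scaled_int : IntervalIntegrable (fun x => f (x / ε)) volume 0 1 := by
    simpa [div_eq_mul_inv, hε.ne'] using
      (hf_per.intervalIntegrable₀ one_ne_zero hf_int 0 ε⁻¹).comp_mul_right (c := ε⁻¹)
  have hprimitive : ∀ x, |∫ t in (0:ℝ)..x, f (t / ε)| ≤ ε * (∫ t in (0:ℝ)..1, |f t|) / 2 :=
    fun x => by
      rw [integral_comp_div f hε.ne', zero_div, smul_eq_mul, abs_mul, abs_of_pos hε, mul_div_assoc]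
      exact mul_le_mul_of_nonneg_left (hf_per.abs_primitive_le_half one_pos hf_int hf_mean _) hε.le
  have hg : ContDiff ℝ 1 fun x => |u x| ^ p := (contDiff_norm_rpow hp).comp hu
  have hg1 : |u 1| ^ p = 0 := by simp [hu1, (zero_lt_one.trans hp).ne']
  rw [integral_mul_eq_neg_integral_primitive_mul_deriv hf_scaled_int
    hg.contDiffOn.absolutelyContinuousOnInterval hg1, abs_neg]
  exact (abs_integral_mul_deriv_abs_rpow_le hp hu zero_le_one hprimitive).trans_eq (by ring)

/-- One-dimensional estimate for the `p`-power: for `p > 1`, a `1`-periodic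
`ρ ∈ L¹(0,1)` with mean `ρ̄`, and any `C¹` function `u` with `u(0) = u(1) = 0`,
`|∫₀¹ (ρ(x/ε) − ρ̄)|u|^p| ≤ (p/2) ε ‖ρ − ρ̄‖_{L¹(0,1)} ‖u‖_{L^p}^{p−1} ‖u'‖_{L^p}`. -/
theorem oneDim_power_estimate (p : ℝ) (hp : 1 < p)
    (ρ : ℝ → ℝ) (hper : Function.Periodic ρ 1)
    (hint : IntervalIntegrable ρ volume 0 1)
    (ρbar : ℝ) (hbar : ρbar = ∫ t in (0:ℝ)..1, ρ t)
    (ε : ℝ) (hε : 0 < ε)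
    (u : ℝ → ℝ) (hu : ContDiff ℝ 1 u) (hu0 : u 0 = 0) (hu1 : u 1 = 0) :
    |∫ x in (0:ℝ)..1, (ρ (x / ε) - ρbar) * |u x| ^ p| ≤
      p / 2 * ε * (∫ t in (0:ℝ)..1, |ρ t - ρbar|) *
        ((∫ x in (0:ℝ)..1, |u x| ^ p) ^ (1 / p)) ^ (p - 1) *
        (∫ x in (0:ℝ)..1, |deriv u x| ^ p) ^ (1 / p) :=
  oneDim_power_estimate_general p hp ρ hper hint ρbar hbar ε hε u hu hu1
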